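/- Let g ≥ 1 and let A, B, C, D be g×g complex matrices such that the 2g×2g block matrix M = [[A,B],[C,D]] is symplectic, i.e. Mᵗ·J·M = J where J = [[0, I],[−I, 0]] (equivalently: AᵗC = CᵗA, BᵗD = DᵗB, and AᵗD − CᵗB = I). Let 𝔹 be a symmetric g×g complex matrix such that C𝔹 + D is invertible, and let c₁, c₂ ∈ ℂ^g. Set 𝔹̃ := (A𝔹 + B)(C𝔹 + D)⁻¹, c̃₁ := A·c₁ − B·c₂, and c̃₂ := D·c₂ − C·c₁. Then c̃₁ + 𝔹̃·c̃₂ = ((C𝔹 + D)⁻¹)ᵗ·(c₁ + 𝔹·c₂). (This is the transformation rule for the coordinates of a point of the Jacobian with respect to the lattice under a symplectic change of the canonical homology basis.) -/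

import Mathlib

/-! Write `E = C𝔹 + D` and `F = A𝔹 + B`. The symplectic relations give `EᵀF = FᵀE`,
`EᵀA - FᵀC = I` and `FᵀD - EᵀB = 𝔹`, hence `Eᵀ (F E⁻¹) = Fᵀ` and
`Eᵀ (c̃₁ + F E⁻¹ c̃₂) = (EᵀA - FᵀC) c₁ + (FᵀD - EᵀB) c₂ = c₁ + 𝔹 c₂`. -/

open Matrix

namespace Matrix

variable {n R : Type*} [Fintype n] [DecidableEq n] [CommRing R]

theorem fromBlocks_symplectic_iff (A B C D : Matrix n n R) :
    (fromBlocks A B C D)ᵀ * fromBlocks 0 1 (-1) 0 * fromBlocks A B C D = fromBlocks 0 1 (-1) 0 ↔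
      Aᵀ * C = Cᵀ * A ∧ Bᵀ * D = Dᵀ * B ∧ Aᵀ * D - Cᵀ * B = 1 := by
  rw [fromBlocks_transpose, fromBlocks_multiply, fromBlocks_multiply, fromBlocks_inj]
  simp only [Matrix.mul_zero, Matrix.mul_one, Matrix.mul_neg, Matrix.neg_mul, zero_add, add_zero,
    neg_add_eq_sub, sub_eq_zero]
  have h : Bᵀ * C - Dᵀ * A = -(Aᵀ * D - Cᵀ * B)ᵀ := by
    simp only [transpose_sub, transpose_mul, transpose_transpose, neg_sub]
  rw [h, neg_inj, transpose_eq_one, eq_comm (a := Bᵀ * D)]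
  tauto

theorem transpose_mul_sub_transpose_mul_eq_one {A B C D : Matrix n n R}
    (h : Aᵀ * D - Cᵀ * B = 1) : Dᵀ * A - Bᵀ * C = 1 := by
  simpa only [transpose_sub, transpose_mul, transpose_transpose, transpose_one] using
    congrArg transpose h

section Moebius

variable {A B C D S : Matrix n n R}

theorem symplectic_moebius_transpose_mul_comm (hAC : Aᵀ * C = Cᵀ * A) (hBD : Bᵀ * D = Dᵀ * B)
    (hAD : Aᵀ * D - Cᵀ * B = 1) (hS : S.IsSymm) :
    (C * S + D)ᵀ * (A * S + B) = (A * S + B)ᵀ * (C * S + D) := by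
  have hDA := transpose_mul_sub_transpose_mul_eq_one hAD
  rw [← sub_eq_zero]
  calc (C * S + D)ᵀ * (A * S + B) - (A * S + B)ᵀ * (C * S + D)
      = S * (Cᵀ * A - Aᵀ * C) * S - S * (Aᵀ * D - Cᵀ * B) + (Dᵀ * A - Bᵀ * C) * S
          + (Dᵀ * B - Bᵀ * D) := by
        simp only [transpose_add, transpose_mul, hS.eq]; noncomm_ring
    _ = 0 := by rw [hAC, hAD, hDA, hBD]; noncomm_ring

theorem symplectic_moebius_transpose_mul_sub_eq_one (hAC : Aᵀ * C = Cᵀ * A)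
    (hAD : Aᵀ * D - Cᵀ * B = 1) (hS : S.IsSymm) :
    (C * S + D)ᵀ * A - (A * S + B)ᵀ * C = 1 := by
  calc (C * S + D)ᵀ * A - (A * S + B)ᵀ * C = S * (Cᵀ * A - Aᵀ * C) + (Dᵀ * A - Bᵀ * C) := by
        simp only [transpose_add, transpose_mul, hS.eq]; noncomm_ring
    _ = 1 := by rw [hAC, transpose_mul_sub_transpose_mul_eq_one hAD]; noncomm_ring

theorem symplectic_moebius_transpose_mul_sub_eq_self (hBD : Bᵀ * D = Dᵀ * B)
    (hAD : Aᵀ * D - Cᵀ * B = 1) (hS : S.IsSymm) :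
    (A * S + B)ᵀ * D - (C * S + D)ᵀ * B = S := by
  calc (A * S + B)ᵀ * D - (C * S + D)ᵀ * B = S * (Aᵀ * D - Cᵀ * B) + (Bᵀ * D - Dᵀ * B) := by
        simp only [transpose_add, transpose_mul, hS.eq]; noncomm_ring
    _ = S := by rw [hAD, hBD]; noncomm_ring

end Moebius

theorem transpose_mul_mul_nonsing_inv_eq {E F : Matrix n n R} (hE : IsUnit E)
    (h : Eᵀ * F = Fᵀ * E) : Eᵀ * (F * E⁻¹) = Fᵀ := by
  rw [← Matrix.mul_assoc, h, Matrix.mul_assoc, mul_nonsing_inv _ ((isUnit_iff_isUnit_det E).1 hE),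
    Matrix.mul_one]

theorem eq_transpose_nonsing_inv_mulVec {E : Matrix n n R} (hE : IsUnit E) {x y : n → R}
    (h : Eᵀ *ᵥ x = y) : x = E⁻¹ᵀ *ᵥ y := by
  rw [← h, transpose_nonsing_inv, mulVec_mulVec,
    nonsing_inv_mul _ ((isUnit_iff_isUnit_det _).1 ((isUnit_transpose _).2 hE)), one_mulVec]

end Matrix

theorem jacobian_coordinates_transform {g : ℕ}
    (A B C D RB : Matrix (Fin g) (Fin g) ℂ)
    (hsymp : (Matrix.fromBlocks A B C D)ᵀ * Matrix.fromBlocks 0 1 (-1) 0 *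
        Matrix.fromBlocks A B C D = Matrix.fromBlocks 0 1 (-1) 0)
    (hRB : RB.IsSymm) (hinv : IsUnit (C * RB + D)) (c₁ c₂ : Fin g → ℂ) :
    (A *ᵥ c₁ - B *ᵥ c₂) +
        ((A * RB + B) * (C * RB + D)⁻¹) *ᵥ (D *ᵥ c₂ - C *ᵥ c₁) =
      ((C * RB + D)⁻¹)ᵀ *ᵥ (c₁ + RB *ᵥ c₂) := by
  obtain ⟨hAC, hBD, hAD⟩ := (fromBlocks_symplectic_iff A B C D).1 hsymp
  set E := C * RB + D
  set F := A * RB + B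
  apply eq_transpose_nonsing_inv_mulVec hinv
  calc Eᵀ *ᵥ ((A *ᵥ c₁ - B *ᵥ c₂) + (F * E⁻¹) *ᵥ (D *ᵥ c₂ - C *ᵥ c₁))
      = Eᵀ *ᵥ (A *ᵥ c₁ - B *ᵥ c₂) + (Eᵀ * (F * E⁻¹)) *ᵥ (D *ᵥ c₂ - C *ᵥ c₁) := by
        rw [mulVec_add, mulVec_mulVec]
    _ = (Eᵀ * A - Fᵀ * C) *ᵥ c₁ + (Fᵀ * D - Eᵀ * B) *ᵥ c₂ := by
        rw [transpose_mul_mul_nonsing_inv_eq hinv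
          (symplectic_moebius_transpose_mul_comm hAC hBD hAD hRB)]
        simp only [mulVec_sub, sub_mulVec, mulVec_mulVec]
        abel
    _ = c₁ + RB *ᵥ c₂ := by
        rw [symplectic_moebius_transpose_mul_sub_eq_one hAC hAD hRB,
          symplectic_moebius_transpose_mul_sub_eq_self hBD hAD hRB, one_mulVec]
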